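/- arXiv:1712.04573 — 5 statements merged into one kernel-verified Lean document; each statement's English description precedes it below -/
import Mathlib

section
/- Let L ∈ ℕ*, σ, σ_p, σ_q > 0, and u, v ∈ ℝ^L. Let p(w) := (2πσ²)^{−L/2} exp(−‖w‖²/(2σ²)) be the density of the centered Gaussian distribution on ℝ^L with covariance σ²I. Then ∫_{ℝ^L} κ_{σ_p}(w, u) κ_{σ_q}(w, v) p(w) dw = (2π)^{−L} υ^{−L/2} exp( −( σ²‖u − v‖² + σ_q²‖u‖² + σ_p²‖v‖² ) / (2υ) ), where υ := σ²σ_p² + σ²σ_q² + σ_p²σ_q². -/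
open MeasureTheory Real InnerProductSpace RealInnerProductSpace

open Complex in
lemma aux_gauss {L : ℕ} {b : ℝ} (hb : 0 < b) (t : EuclideanSpace ℝ (Fin L)) :
    ∫ w : EuclideanSpace ℝ (Fin L), rexp (-b * ‖w‖ ^ 2 + ⟪t, w⟫)
      = (π / b) ^ ((L : ℝ) / 2) * rexp (‖t‖ ^ 2 / (4 * b)) := by
  have hb' : 0 < (b : ℂ).re := by simpa using hb
  have h := GaussianFourier.integral_cexp_neg_mul_sq_norm_add
    (V := EuclideanSpace ℝ (Fin L)) hb' 1 t
  simp only [one_pow, one_mul, finrank_euclideanSpace_fin] at h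
  rw [← Complex.ofReal_inj]
  calc ((∫ w : EuclideanSpace ℝ (Fin L), rexp (-b * ‖w‖ ^ 2 + ⟪t, w⟫) : ℝ) : ℂ)
      = ∫ w : EuclideanSpace ℝ (Fin L), ((rexp (-b * ‖w‖ ^ 2 + ⟪t, w⟫) : ℝ) : ℂ) :=
        integral_ofReal.symm
    _ = ∫ w : EuclideanSpace ℝ (Fin L), Complex.exp (-(b:ℂ) * ‖w‖ ^ 2 + (⟪t, w⟫ : ℝ)) := by
        congr 1; ext w; rw [Complex.ofReal_exp]; congr 1; push_cast; ring
    _ = ((π:ℂ) / b) ^ ((L:ℝ) / 2 : ℂ) * Complex.exp ((‖t‖:ℂ) ^ 2 / (4 * b)) := by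
        rw [h]; norm_num
    _ = (((π / b) ^ ((L : ℝ) / 2) * rexp (‖t‖ ^ 2 / (4 * b)) : ℝ) : ℂ) := by
        rw [show ((π:ℂ) / b) = ((π / b : ℝ) : ℂ) by push_cast; ring,
          show (((L:ℝ) : ℂ) / 2) = (((L:ℝ)/2 : ℝ) : ℂ) by push_cast; ring,
          ← Complex.ofReal_cpow (by positivity),
          show ((‖t‖:ℂ) ^ 2 / (4 * b)) = ((‖t‖ ^ 2 / (4 * b) : ℝ) : ℂ) by push_cast; ring,
          ← Complex.ofReal_exp, ← Complex.ofReal_mul]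

set_option maxHeartbeats 2000000 in
/-- Analytical expression of the `L²(μ)`-inner product of two normalized Gaussian functions
when the input follows a centered Gaussian distribution with covariance `σ²I`. -/
theorem stmt3 {L : ℕ} (hL : 0 < L) (σ σp σq : ℝ) (hσ : 0 < σ) (hσp : 0 < σp) (hσq : 0 < σq)
    (u v : EuclideanSpace ℝ (Fin L))
    (κ : ℝ → EuclideanSpace ℝ (Fin L) → EuclideanSpace ℝ (Fin L) → ℝ)
    (hκ : ∀ s x y, κ s x y
      = (2 * π * s ^ 2) ^ (-(L : ℝ) / 2) * Real.exp (-‖x - y‖ ^ 2 / (2 * s ^ 2)))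
    (p : EuclideanSpace ℝ (Fin L) → ℝ)
    (hp : ∀ w, p w = (2 * π * σ ^ 2) ^ (-(L : ℝ) / 2) * Real.exp (-‖w‖ ^ 2 / (2 * σ ^ 2)))
    (υ : ℝ) (hυ : υ = σ ^ 2 * σp ^ 2 + σ ^ 2 * σq ^ 2 + σp ^ 2 * σq ^ 2) :
    ∫ w, κ σp w u * κ σq w v * p w
      = (2 * π) ^ (-(L : ℝ)) * υ ^ (-(L : ℝ) / 2) *
        Real.exp (-(σ ^ 2 * ‖u - v‖ ^ 2 + σq ^ 2 * ‖u‖ ^ 2 + σp ^ 2 * ‖v‖ ^ 2) / (2 * υ)) := by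
  have hυ0 : 0 < υ := by rw [hυ]; positivity
  set b : ℝ := υ / (2 * (σ ^ 2 * σp ^ 2 * σq ^ 2)) with hbdef
  have hb0 : 0 < b := by positivity
  set t : EuclideanSpace ℝ (Fin L) := (σp ^ 2)⁻¹ • u + (σq ^ 2)⁻¹ • v with htdef
  have h3 : ∀ w : EuclideanSpace ℝ (Fin L),
      ⟪t, w⟫ = (σp ^ 2)⁻¹ * ⟪w, u⟫ + (σq ^ 2)⁻¹ * ⟪w, v⟫ := by
    intro w
    rw [htdef, inner_add_left, real_inner_smul_left, real_inner_smul_left,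
      real_inner_comm u w, real_inner_comm v w]
  have key : ∀ w, κ σp w u * κ σq w v * p w
      = ((2 * π * σp ^ 2) ^ (-(L:ℝ)/2) * (2 * π * σq ^ 2) ^ (-(L:ℝ)/2)
          * (2 * π * σ ^ 2) ^ (-(L:ℝ)/2)
          * rexp (-(‖u‖ ^ 2 / (2 * σp ^ 2) + ‖v‖ ^ 2 / (2 * σq ^ 2))))
        * rexp (-b * ‖w‖ ^ 2 + ⟪t, w⟫) := by
    intro w
    rw [hκ, hκ, hp]
    have hexp : -‖w - u‖ ^ 2 / (2 * σp ^ 2) + -‖w - v‖ ^ 2 / (2 * σq ^ 2)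
        + -‖w‖ ^ 2 / (2 * σ ^ 2)
        = -(‖u‖ ^ 2 / (2 * σp ^ 2) + ‖v‖ ^ 2 / (2 * σq ^ 2))
          + (-b * ‖w‖ ^ 2 + ⟪t, w⟫) := by
      rw [h3 w, norm_sub_sq_real, norm_sub_sq_real, hbdef, hυ]
      field_simp
      ring
    calc (2 * π * σp ^ 2) ^ (-(L:ℝ)/2) * rexp (-‖w - u‖ ^ 2 / (2 * σp ^ 2))
          * ((2 * π * σq ^ 2) ^ (-(L:ℝ)/2) * rexp (-‖w - v‖ ^ 2 / (2 * σq ^ 2)))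
          * ((2 * π * σ ^ 2) ^ (-(L:ℝ)/2) * rexp (-‖w‖ ^ 2 / (2 * σ ^ 2)))
        = ((2 * π * σp ^ 2) ^ (-(L:ℝ)/2) * (2 * π * σq ^ 2) ^ (-(L:ℝ)/2)
            * (2 * π * σ ^ 2) ^ (-(L:ℝ)/2))
          * rexp (-‖w - u‖ ^ 2 / (2 * σp ^ 2) + -‖w - v‖ ^ 2 / (2 * σq ^ 2)
              + -‖w‖ ^ 2 / (2 * σ ^ 2)) := by
          rw [Real.exp_add, Real.exp_add]; ring
      _ = _ := by rw [hexp, Real.exp_add]; ring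
  simp_rw [key]
  rw [MeasureTheory.integral_const_mul, aux_gauss hb0 t]
  have ht2 : ‖t‖ ^ 2 = (σp ^ 2)⁻¹ ^ 2 * ‖u‖ ^ 2
      + 2 * ((σp ^ 2)⁻¹ * (σq ^ 2)⁻¹) * ⟪u, v⟫ + (σq ^ 2)⁻¹ ^ 2 * ‖v‖ ^ 2 := by
    rw [← real_inner_self_eq_norm_sq, ← real_inner_self_eq_norm_sq,
      ← real_inner_self_eq_norm_sq, htdef]
    simp only [inner_add_left, inner_add_right, real_inner_smul_left, real_inner_smul_right,
      real_inner_comm v u]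
    ring
  have huv : ‖u - v‖ ^ 2 = ‖u‖ ^ 2 - 2 * ⟪u, v⟫ + ‖v‖ ^ 2 := norm_sub_sq_real u v
  have erpow : ∀ x : ℝ, 0 < x → x ^ (-(L:ℝ)/2) = (x⁻¹) ^ ((L:ℝ)/2) := by
    intro x hx
    rw [neg_div, Real.rpow_neg hx.le, ← Real.inv_rpow hx.le]
  have hc : (2 * π * σp ^ 2) ^ (-(L:ℝ)/2) * (2 * π * σq ^ 2) ^ (-(L:ℝ)/2)
      * (2 * π * σ ^ 2) ^ (-(L:ℝ)/2) * (π / b) ^ ((L:ℝ)/2)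
      = (2 * π) ^ (-(L:ℝ)) * υ ^ (-(L:ℝ)/2) := by
    rw [erpow _ (by positivity), erpow _ (by positivity), erpow _ (by positivity),
      erpow _ hυ0,
      show (2 * π) ^ (-(L:ℝ)) = (((2 * π) ^ 2)⁻¹) ^ ((L:ℝ)/2) by
        rw [show ((2*π:ℝ)^2)⁻¹ = (2*π) ^ (-2:ℝ) by
            rw [Real.rpow_neg (by positivity)]; norm_num [Real.rpow_two],
          ← Real.rpow_mul (by positivity)]
        congr 1
        ring,
      ← Real.mul_rpow (by positivity) (by positivity),
      ← Real.mul_rpow (by positivity) (by positivity),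
      ← Real.mul_rpow (by positivity) (by positivity),
      ← Real.mul_rpow (by positivity) (by positivity)]
    congr 1
    rw [hbdef]
    field_simp
  have hexp2 : -(‖u‖ ^ 2 / (2 * σp ^ 2) + ‖v‖ ^ 2 / (2 * σq ^ 2)) + ‖t‖ ^ 2 / (4 * b)
      = -(σ ^ 2 * ‖u - v‖ ^ 2 + σq ^ 2 * ‖u‖ ^ 2 + σp ^ 2 * ‖v‖ ^ 2) / (2 * υ) := by
    rw [ht2, huv, hbdef, hυ]
    field_simp
    ring
  calc (2 * π * σp ^ 2) ^ (-(L:ℝ)/2) * (2 * π * σq ^ 2) ^ (-(L:ℝ)/2)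
        * (2 * π * σ ^ 2) ^ (-(L:ℝ)/2)
        * rexp (-(‖u‖ ^ 2 / (2 * σp ^ 2) + ‖v‖ ^ 2 / (2 * σq ^ 2)))
        * ((π / b) ^ ((L:ℝ)/2) * rexp (‖t‖ ^ 2 / (4 * b)))
      = ((2 * π * σp ^ 2) ^ (-(L:ℝ)/2) * (2 * π * σq ^ 2) ^ (-(L:ℝ)/2)
          * (2 * π * σ ^ 2) ^ (-(L:ℝ)/2) * (π / b) ^ ((L:ℝ)/2))
        * rexp (-(‖u‖ ^ 2 / (2 * σp ^ 2) + ‖v‖ ^ 2 / (2 * σq ^ 2)) + ‖t‖ ^ 2 / (4 * b)) := by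
        rw [Real.exp_add]; ring
    _ = _ := by rw [hc, hexp2]
end

section
/- Let H be a real Hilbert space, r ≥ 2 an integer, and let g, f₁, …, f_{r−1} ∈ H be nonzero vectors such that the coherence of every pair of distinct vectors among {g, f₁, …, f_{r−1}} is at most δ, where δ ∈ [0, 1] satisfies (r − 1)δ < 1. Let M := span{f₁, …, f_{r−1}} and let P_M denote the orthogonal projection onto M. Then ‖g − P_M(g)‖² / ‖g‖² ≥ 1 − (r − 1)δ² / (1 − (r − 2)δ). -/
/-!
Write `P g = ∑ cᵢ fᵢ`, `s = ∑ |cᵢ| ‖fᵢ‖` and `n = r - 1`. Coherence of `g` with the `fᵢ` gives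
`‖P g‖² = ⟪g, P g⟫ ≤ δ ‖g‖ s`. Bounding the off-diagonal Gram entries below by `-δ ‖fᵢ‖ ‖fⱼ‖` and
applying Cauchy–Schwarz gives `(1 - (n - 1)δ) s² ≤ n ‖P g‖²`. Together,
`(1 - (n - 1)δ) ‖P g‖² ≤ n δ² ‖g‖²`, and Pythagoras `‖g - P g‖² = ‖g‖² - ‖P g‖²` concludes.
-/

open RealInnerProductSpace Finset

section Coherence

variable {H : Type*} [NormedAddCommGroup H] [InnerProductSpace ℝ H]

theorem abs_real_inner_le_of_coherence_le {x y : H} {δ : ℝ}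
    (h : |⟪x, y⟫| / (‖x‖ * ‖y‖) ≤ δ) : |⟪x, y⟫| ≤ δ * (‖x‖ * ‖y‖) := by
  rcases (mul_nonneg (norm_nonneg x) (norm_nonneg y)).eq_or_lt with hxy | hxy
  · simpa [← hxy] using abs_real_inner_le_norm x y
  · exact (div_le_iff₀ hxy).1 h

variable {ι : Type*} [Fintype ι] {f : ι → H} {δ : ℝ}

theorem real_inner_sum_smul_le (g : H) (c : ι → ℝ)
    (hg : ∀ i, |⟪g, f i⟫| ≤ δ * (‖g‖ * ‖f i‖)) :
    ⟪g, ∑ i, c i • f i⟫ ≤ δ * ‖g‖ * ∑ i, |c i| * ‖f i‖ := by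
  rw [inner_sum, mul_sum]
  refine sum_le_sum fun i _ => ?_
  calc ⟪g, c i • f i⟫ ≤ |c i| * |⟪g, f i⟫| := by
        rw [real_inner_smul_right, ← abs_mul]; exact le_abs_self _
    _ ≤ |c i| * (δ * (‖g‖ * ‖f i‖)) := by gcongr; exact hg i
    _ = δ * ‖g‖ * (|c i| * ‖f i‖) := by ring

theorem le_norm_sum_smul_sq (c : ι → ℝ)
    (hf : ∀ i j, i ≠ j → |⟪f i, f j⟫| ≤ δ * (‖f i‖ * ‖f j‖)) :
    (1 + δ) * ∑ i, (|c i| * ‖f i‖) ^ 2 - δ * (∑ i, |c i| * ‖f i‖) ^ 2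
      ≤ ‖∑ i, c i • f i‖ ^ 2 := by
  classical
  set a : ι → ℝ := fun i => |c i| * ‖f i‖
  have entry : ∀ i j, (if i = j then (1 + δ) * a i ^ 2 else 0) - δ * (a i * a j)
      ≤ c i * c j * ⟪f i, f j⟫ := by
    intro i j
    split_ifs with hij
    · subst hij
      have hdiag : a i * a i = c i * c i * ‖f i‖ ^ 2 := by
        simp only [a]; rw [← abs_mul_abs_self (c i)]; ring
      rw [real_inner_self_eq_norm_sq]
      linear_combination hdiag
    · calc 0 - δ * (a i * a j) = -(|c i * c j| * (δ * (‖f i‖ * ‖f j‖))) := by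
            simp only [a, abs_mul]; ring
        _ ≤ -(|c i * c j| * |⟪f i, f j⟫|) := by gcongr; exact hf i j hij
        _ = -|c i * c j * ⟪f i, f j⟫| := by rw [abs_mul (c i * c j)]
        _ ≤ c i * c j * ⟪f i, f j⟫ := neg_abs_le _
  calc (1 + δ) * ∑ i, a i ^ 2 - δ * (∑ i, a i) ^ 2
      = ∑ i, ∑ j, ((if i = j then (1 + δ) * a i ^ 2 else 0) - δ * (a i * a j)) := by
        simp only [sum_sub_distrib, sum_ite_eq, mem_univ, if_true, ← mul_sum, sq, sum_mul_sum]
    _ ≤ ∑ i, ∑ j, c i * c j * ⟪f i, f j⟫ := sum_le_sum fun i _ => sum_le_sum fun j _ => entry i j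
    _ = ‖∑ i, c i • f i‖ ^ 2 := by
        rw [← real_inner_self_eq_norm_sq, sum_inner]
        refine sum_congr rfl fun i _ => ?_
        rw [inner_sum]
        refine sum_congr rfl fun j _ => ?_
        rw [real_inner_smul_left, real_inner_smul_right, mul_assoc]

theorem sq_sum_le_card_mul_norm_sum_smul_sq (c : ι → ℝ) (hδ : 0 ≤ δ)
    (hf : ∀ i j, i ≠ j → |⟪f i, f j⟫| ≤ δ * (‖f i‖ * ‖f j‖)) :
    (1 - (Fintype.card ι - 1) * δ) * (∑ i, |c i| * ‖f i‖) ^ 2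
      ≤ Fintype.card ι * ‖∑ i, c i • f i‖ ^ 2 := by
  have gram := le_norm_sum_smul_sq c hf
  have cauchySchwarz := sq_sum_le_card_mul_sum_sq (s := univ) (f := fun i => |c i| * ‖f i‖)
  rw [card_univ] at cauchySchwarz
  have hcard : (0 : ℝ) ≤ Fintype.card ι := Nat.cast_nonneg _
  linarith [mul_le_mul_of_nonneg_left gram hcard,
    mul_le_mul_of_nonneg_left cauchySchwarz (by linarith : (0 : ℝ) ≤ 1 + δ)]

variable {K : Submodule ℝ H} [K.HasOrthogonalProjection]

omit [Fintype ι] in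
theorem real_inner_starProjection_right_self (g : H) :
    ⟪g, K.starProjection g⟫ = ‖K.starProjection g‖ ^ 2 := by
  rw [← real_inner_self_eq_norm_sq, ← sub_eq_zero, ← inner_sub_left]
  exact K.starProjection_inner_eq_zero g _ (K.starProjection_apply_mem g)

omit [Fintype ι] in
theorem norm_sub_starProjection_sq (g : H) :
    ‖g - K.starProjection g‖ ^ 2 = ‖g‖ ^ 2 - ‖K.starProjection g‖ ^ 2 := by
  rw [norm_sub_sq_real, real_inner_starProjection_right_self]; ring

theorem norm_starProjection_sq_le (hK : K ≤ Submodule.span ℝ (Set.range f)) (g : H)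
    (hδ : 0 ≤ δ) (hpos : 0 < 1 - (Fintype.card ι - 1) * δ)
    (hg : ∀ i, |⟪g, f i⟫| ≤ δ * (‖g‖ * ‖f i‖))
    (hf : ∀ i j, i ≠ j → |⟪f i, f j⟫| ≤ δ * (‖f i‖ * ‖f j‖)) :
    (1 - (Fintype.card ι - 1) * δ) * ‖K.starProjection g‖ ^ 2
      ≤ Fintype.card ι * δ ^ 2 * ‖g‖ ^ 2 := by
  obtain ⟨c, hc⟩ : ∃ c : ι → ℝ, ∑ i, c i • f i = K.starProjection g :=
    (Submodule.mem_span_range_iff_exists_fun ℝ).1 (hK (K.starProjection_apply_mem g))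
  have upper : ‖K.starProjection g‖ ^ 2 ≤ δ * ‖g‖ * ∑ i, |c i| * ‖f i‖ := by
    rw [← real_inner_starProjection_right_self, ← hc]; exact real_inner_sum_smul_le g c hg
  have lower := sq_sum_le_card_mul_norm_sum_smul_sq c hδ hf
  rw [hc] at lower
  set t := ‖K.starProjection g‖ ^ 2
  set s := ∑ i, |c i| * ‖f i‖
  set κ := 1 - (Fintype.card ι - 1) * δ
  rcases (show 0 ≤ t by positivity).eq_or_lt with ht | ht
  · rw [← ht, mul_zero]; positivity
  refine le_of_mul_le_mul_right ?_ ht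
  calc κ * t * t ≤ κ * (δ * ‖g‖ * s) ^ 2 := by
        rw [mul_assoc, ← sq]; gcongr
    _ = δ ^ 2 * ‖g‖ ^ 2 * (κ * s ^ 2) := by ring
    _ ≤ δ ^ 2 * ‖g‖ ^ 2 * (Fintype.card ι * t) := by gcongr
    _ = Fintype.card ι * δ ^ 2 * ‖g‖ ^ 2 * t := by ring

theorem one_sub_mul_norm_sq_le_norm_sub_starProjection_sq
    (hK : K ≤ Submodule.span ℝ (Set.range f)) (g : H)
    (hδ : 0 ≤ δ) (hpos : 0 < 1 - (Fintype.card ι - 1) * δ)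
    (hg : ∀ i, |⟪g, f i⟫| ≤ δ * (‖g‖ * ‖f i‖))
    (hf : ∀ i j, i ≠ j → |⟪f i, f j⟫| ≤ δ * (‖f i‖ * ‖f j‖)) :
    (1 - Fintype.card ι * δ ^ 2 / (1 - (Fintype.card ι - 1) * δ)) * ‖g‖ ^ 2
      ≤ ‖g - K.starProjection g‖ ^ 2 := by
  rw [norm_sub_starProjection_sq, one_sub_mul, div_mul_eq_mul_div, sub_le_sub_iff_left,
    le_div_iff₀' hpos]
  exact norm_starProjection_sq_le hK g hδ hpos hg hf

end Coherence

theorem stmt5_general {H : Type*} [NormedAddCommGroup H] [InnerProductSpace ℝ H]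
    {r : ℕ} (hr : 2 ≤ r) (g : H) (f : Fin (r - 1) → H)
    (hg : g ≠ 0)
    (δ : ℝ) (hδ0 : 0 ≤ δ) (hδr : ((r : ℝ) - 1) * δ < 1)
    (hcoh1 : ∀ i, |⟪g, f i⟫| / (‖g‖ * ‖f i‖) ≤ δ)
    (hcoh2 : ∀ i j, i ≠ j → |⟪f i, f j⟫| / (‖f i‖ * ‖f j‖) ≤ δ)
    (M : Submodule ℝ H) [FiniteDimensional ℝ M]
    (hM : M = Submodule.span ℝ (Set.range f)) :
    1 - ((r : ℝ) - 1) * δ ^ 2 / (1 - ((r : ℝ) - 2) * δ)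
      ≤ ‖g - (Submodule.orthogonalProjection M g : H)‖ ^ 2 / ‖g‖ ^ 2 := by
  have hcard : (Fintype.card (Fin (r - 1)) : ℝ) = r - 1 := by
    rw [Fintype.card_fin, Nat.cast_sub (by omega : 1 ≤ r), Nat.cast_one]
  have hpos : 0 < 1 - (Fintype.card (Fin (r - 1)) - 1 : ℝ) * δ := by rw [hcard]; linarith
  have key := one_sub_mul_norm_sq_le_norm_sub_starProjection_sq hM.le g hδ0 hpos
    (fun i => abs_real_inner_le_of_coherence_le (hcoh1 i))
    (fun i j hij => abs_real_inner_le_of_coherence_le (hcoh2 i j hij))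
  rw [hcard, show (r : ℝ) - 1 - 1 = r - 2 by ring] at key
  rwa [le_div_iff₀ (pow_pos (norm_pos_iff.2 hg) 2)]

/-- Coherence-to-ALD lemma: if every pair of distinct vectors among `{g, f₁, …, f_{r-1}}` has
coherence at most `δ` with `(r-1)δ < 1`, then the normalized squared distance of `g` to the
span of the `fᵢ` is at least `1 - (r-1)δ²/(1-(r-2)δ)`. -/
theorem stmt5 {H : Type*} [NormedAddCommGroup H] [InnerProductSpace ℝ H] [CompleteSpace H]
    {r : ℕ} (hr : 2 ≤ r) (g : H) (f : Fin (r - 1) → H)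
    (hg : g ≠ 0) (hf : ∀ i, f i ≠ 0)
    (δ : ℝ) (hδ0 : 0 ≤ δ) (hδ1 : δ ≤ 1) (hδr : ((r : ℝ) - 1) * δ < 1)
    (hcoh1 : ∀ i, |⟪g, f i⟫| / (‖g‖ * ‖f i‖) ≤ δ)
    (hcoh2 : ∀ i j, i ≠ j → |⟪f i, f j⟫| / (‖f i‖ * ‖f j‖) ≤ δ)
    (M : Submodule ℝ H) [FiniteDimensional ℝ M]
    (hM : M = Submodule.span ℝ (Set.range f)) :
    1 - ((r : ℝ) - 1) * δ ^ 2 / (1 - ((r : ℝ) - 2) * δ)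
      ≤ ‖g - (Submodule.orthogonalProjection M g : H)‖ ^ 2 / ‖g‖ ^ 2 :=
  stmt5_general hr g f hg δ hδ0 hδr hcoh1 hcoh2 M hM
end

section
/- Let (Ω, P) be a probability space, u : Ω → ℝ^L a random vector whose law is the probability measure μ on ℝ^L, ν ∈ L²(Ω, P), and ψ ∈ L²(ℝ^L, μ). Let M ⊂ L²(ℝ^L, μ) be a finite-dimensional subspace, g ∈ L²(ℝ^L, μ) with g ∉ M, and M' := M + span{g}. Define d := ψ(u) + ν, and assume E[f(u) ν] = 0 for every f ∈ M' and E[ψ(u) ν] = 0. Assume the approximate-linear-dependency condition ‖g − P_M(g)‖² ≥ η ‖g‖² holds for some η ∈ [0, 1]. Write the best approximation P_{M'}(ψ) uniquely as P_{M'}(ψ) = m + h* g with m ∈ M and h* ∈ ℝ. Then the reduction of the minimum mean squared error satisfies E[(d − (P_M ψ)(u))²] − E[(d − (P_{M'} ψ)(u))²] ≥ (h*)² ‖g‖² η. -/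
/-!
Since the noise is orthogonal to `ψ ∘ u` and to every `f ∘ u` with `f ∈ M'`, the mean squared error
of a predictor `f ∈ M'` splits as `‖ψ - f‖² + E[ν²]`, so the reduction of the MMSE is
`‖ψ - P_M ψ‖² - ‖ψ - P_{M'} ψ‖² = ‖P_{M'} ψ - P_M ψ‖²` by Pythagoras. Writing
`P_{M'} ψ - P_M ψ = h* g - k` with `k ∈ M`, its component orthogonal to `M` is `h* (g - P_M g)`,
whence the reduction is at least `(h*)² ‖g - P_M g‖² ≥ (h*)² η ‖g‖²`.
-/

open MeasureTheory

section Projection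

variable {E : Type*} [NormedAddCommGroup E] [InnerProductSpace ℝ E]
  (K : Submodule ℝ E) [K.HasOrthogonalProjection]

theorem norm_sub_sq_eq_norm_sub_starProjection_sq_add (x : E) {k : E} (hk : k ∈ K) :
    ‖x - k‖ ^ 2 = ‖x - K.starProjection x‖ ^ 2 + ‖K.starProjection x - k‖ ^ 2 := by
  rw [← sub_add_sub_cancel x (K.starProjection x) k]
  simp only [sq]
  exact norm_add_sq_eq_norm_sq_add_norm_sq_real <| K.inner_left_of_mem_orthogonal
    (sub_mem (K.starProjection_apply_mem x) hk) (K.sub_starProjection_mem_orthogonal x)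

theorem sq_mul_norm_sub_starProjection_sq_le (g : E) (c : ℝ) {k : E} (hk : k ∈ K) :
    c ^ 2 * ‖g - K.starProjection g‖ ^ 2 ≤ ‖c • g - k‖ ^ 2 := by
  rw [norm_sub_sq_eq_norm_sub_starProjection_sq_add K (c • g) hk, map_smul, ← smul_sub,
    norm_smul, mul_pow, Real.norm_eq_abs, sq_abs]
  exact le_add_of_nonneg_right (sq_nonneg _)

end Projection

section MeanSquare

variable {Ω : Type*} [MeasurableSpace Ω] {P : Measure Ω}

theorem integral_add_sq_of_integral_mul_eq_zero {X Y : Ω → ℝ} (hX : MemLp X 2 P)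
    (hY : MemLp Y 2 P) (hXY : ∫ ω, X ω * Y ω ∂P = 0) :
    ∫ ω, (X ω + Y ω) ^ 2 ∂P = ∫ ω, X ω ^ 2 ∂P + ∫ ω, Y ω ^ 2 ∂P := by
  have hX2 : Integrable (fun ω => X ω ^ 2) P := hX.integrable_sq
  have hcross : Integrable (fun ω => 2 * (X ω * Y ω)) P := (hX.integrable_mul hY).const_mul 2
  calc ∫ ω, (X ω + Y ω) ^ 2 ∂P = ∫ ω, (X ω ^ 2 + 2 * (X ω * Y ω) + Y ω ^ 2) ∂P := by
        congr 1 with ω; ring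
    _ = ∫ ω, X ω ^ 2 ∂P + ∫ ω, Y ω ^ 2 ∂P := by
        have hX2cross : Integrable (fun ω => X ω ^ 2 + 2 * (X ω * Y ω)) P := hX2.add hcross
        rw [integral_add hX2cross hY.integrable_sq, integral_add hX2 hcross, integral_const_mul,
          hXY, mul_zero, add_zero]

variable {α : Type*} [MeasurableSpace α] {μ : Measure α} {u : Ω → α}

theorem Lp.memLp_comp_of_map_eq {E : Type*} [NormedAddCommGroup E] {p : ENNReal}
    (hu : AEMeasurable u P) (hlaw : P.map u = μ) (f : Lp E p μ) :
    MemLp (fun ω => f (u ω)) p P := by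
  subst hlaw
  exact (Lp.memLp f).comp_of_map hu

theorem integral_sq_comp_eq_norm_sq (hu : AEMeasurable u P) (hlaw : P.map u = μ)
    (f : Lp ℝ 2 μ) : ∫ ω, f (u ω) ^ 2 ∂P = ‖f‖ ^ 2 := by
  subst hlaw
  have hf2 : AEStronglyMeasurable (fun x => f x ^ 2) (P.map u) :=
    (Lp.aestronglyMeasurable f).pow 2
  rw [← integral_map hu hf2, ← real_inner_self_eq_norm_sq, L2.inner_def]
  simp [sq]

theorem integral_sq_add_sub_comp (hu : AEMeasurable u P) (hlaw : P.map u = μ) {ν : Ω → ℝ}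
    (hν : MemLp ν 2 P) {ψ f : Lp ℝ 2 μ} (hψ : ∫ ω, ψ (u ω) * ν ω ∂P = 0)
    (hf : ∫ ω, f (u ω) * ν ω ∂P = 0) :
    ∫ ω, (ψ (u ω) + ν ω - f (u ω)) ^ 2 ∂P = ‖ψ - f‖ ^ 2 + ∫ ω, ν ω ^ 2 ∂P := by
  have hψu := Lp.memLp_comp_of_map_eq hu hlaw ψ
  have hfu := Lp.memLp_comp_of_map_eq hu hlaw f
  have hmulν {F : Ω → ℝ} (hF : MemLp F 2 P) : Integrable (fun ω => F ω * ν ω) P :=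
    hF.integrable_mul hν
  have horth : ∫ ω, (ψ (u ω) - f (u ω)) * ν ω ∂P = 0 := by
    simp_rw [sub_mul]
    rw [integral_sub (hmulν hψu) (hmulν hfu), hψ, hf, sub_zero]
  have hsub : ∀ᵐ ω ∂P, (ψ - f) (u ω) = ψ (u ω) - f (u ω) := by
    subst hlaw
    exact ae_of_ae_map hu (Lp.coeFn_sub ψ f)
  calc ∫ ω, (ψ (u ω) + ν ω - f (u ω)) ^ 2 ∂P
      = ∫ ω, ((ψ (u ω) - f (u ω)) + ν ω) ^ 2 ∂P := by congr 1 with ω; ring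
    _ = ∫ ω, (ψ (u ω) - f (u ω)) ^ 2 ∂P + ∫ ω, ν ω ^ 2 ∂P :=
        integral_add_sq_of_integral_mul_eq_zero (hψu.sub hfu) hν horth
    _ = ‖ψ - f‖ ^ 2 + ∫ ω, ν ω ^ 2 ∂P := by
        rw [← integral_sq_comp_eq_norm_sq hu hlaw (ψ - f)]
        congr 1
        exact integral_congr_ae (hsub.mono fun ω h => by simp only [h])

end MeanSquare

theorem stmt6_general {Ω : Type*} [MeasurableSpace Ω] (P : Measure Ω)
    {L : ℕ} (μ : Measure (Fin L → ℝ))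
    (u : Ω → (Fin L → ℝ)) (hu : Measurable u) (hlaw : P.map u = μ)
    (ν : Ω → ℝ) (hν : MemLp ν 2 P)
    (ψ g : Lp ℝ 2 μ)
    (M M' : Submodule ℝ (Lp ℝ 2 μ)) [FiniteDimensional ℝ M] [FiniteDimensional ℝ M']
    (hM' : M' = M ⊔ Submodule.span ℝ {g})
    (d : Ω → ℝ) (hd : d = fun ω => ψ (u ω) + ν ω)
    (horth : ∀ f ∈ M', ∫ ω, (f : Lp ℝ 2 μ) (u ω) * ν ω ∂P = 0)
    (horthψ : ∫ ω, ψ (u ω) * ν ω ∂P = 0)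
    (η : ℝ)
    (hALD : η * ‖g‖ ^ 2 ≤ ‖g - (Submodule.orthogonalProjection M g : Lp ℝ 2 μ)‖ ^ 2)
    (m : Lp ℝ 2 μ) (hm : m ∈ M) (hstar : ℝ)
    (hdecomp : (Submodule.orthogonalProjection M' ψ : Lp ℝ 2 μ) = m + hstar • g) :
    hstar ^ 2 * ‖g‖ ^ 2 * η
      ≤ (∫ ω, (d ω - (Submodule.orthogonalProjection M ψ : Lp ℝ 2 μ) (u ω)) ^ 2 ∂P)
        - ∫ ω, (d ω - (Submodule.orthogonalProjection M' ψ : Lp ℝ 2 μ) (u ω)) ^ 2 ∂P := by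
  simp only [← Submodule.starProjection_apply] at hALD hdecomp ⊢
  subst hd
  have hMM' : M ≤ M' := hM' ▸ le_sup_left
  have hPψ := M.starProjection_apply_mem ψ
  rw [integral_sq_add_sub_comp hu.aemeasurable hlaw hν horthψ (horth _ (hMM' hPψ)),
    integral_sq_add_sub_comp hu.aemeasurable hlaw hν horthψ
      (horth _ (M'.starProjection_apply_mem ψ)),
    norm_sub_sq_eq_norm_sub_starProjection_sq_add M' ψ (hMM' hPψ)]
  have hgain :
      M'.starProjection ψ - M.starProjection ψ = hstar • g - (M.starProjection ψ - m) := by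
    rw [hdecomp]; abel
  have hkey := sq_mul_norm_sub_starProjection_sq_le M g hstar (sub_mem hPψ hm)
  rw [← hgain] at hkey
  linarith [mul_le_mul_of_nonneg_left hALD (sq_nonneg hstar)]

/-- Under the ALD condition `‖g - P_M g‖² ≥ η‖g‖²`, enlarging the dictionary subspace `M` to
`M' = M + span{g}` reduces the MMSE by at least `(h*)²‖g‖²η`, where `h*` is the coefficient of
`g` in the best approximation `P_{M'}(ψ) = m + h* g`. -/
theorem stmt6 {Ω : Type*} [MeasurableSpace Ω] (P : Measure Ω) [IsProbabilityMeasure P]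
    {L : ℕ} (μ : Measure (Fin L → ℝ)) [IsProbabilityMeasure μ]
    (u : Ω → (Fin L → ℝ)) (hu : Measurable u) (hlaw : P.map u = μ)
    (ν : Ω → ℝ) (hν : MemLp ν 2 P)
    (ψ g : Lp ℝ 2 μ)
    (M M' : Submodule ℝ (Lp ℝ 2 μ)) [FiniteDimensional ℝ M] [FiniteDimensional ℝ M']
    (hgM : g ∉ M) (hM' : M' = M ⊔ Submodule.span ℝ {g})
    (d : Ω → ℝ) (hd : d = fun ω => ψ (u ω) + ν ω)
    (horth : ∀ f ∈ M', ∫ ω, (f : Lp ℝ 2 μ) (u ω) * ν ω ∂P = 0)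
    (horthψ : ∫ ω, ψ (u ω) * ν ω ∂P = 0)
    (η : ℝ) (hη0 : 0 ≤ η) (hη1 : η ≤ 1)
    (hALD : η * ‖g‖ ^ 2 ≤ ‖g - (Submodule.orthogonalProjection M g : Lp ℝ 2 μ)‖ ^ 2)
    (m : Lp ℝ 2 μ) (hm : m ∈ M) (hstar : ℝ)
    (hdecomp : (Submodule.orthogonalProjection M' ψ : Lp ℝ 2 μ) = m + hstar • g) :
    hstar ^ 2 * ‖g‖ ^ 2 * η
      ≤ (∫ ω, (d ω - (Submodule.orthogonalProjection M ψ : Lp ℝ 2 μ) (u ω)) ^ 2 ∂P)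
        - ∫ ω, (d ω - (Submodule.orthogonalProjection M' ψ : Lp ℝ 2 μ) (u ω)) ^ 2 ∂P :=
  stmt6_general P μ u hu hlaw ν hν ψ g M M' hM' d hd horth horthψ η hALD m hm hstar hdecomp
end

section
/- Let R ∈ ℝ^{r×r} be a symmetric positive-definite matrix, f ∈ ℝ^r with f ≠ 0, d ∈ ℝ, ρ ≥ 0, and λ ∈ [0, 2]. Given h ∈ ℝ^r, set e := d − fᵀh and define the updated vector h⁺ := h + λ · sgn(e) · max{|e| − ρ, 0} / (fᵀ R⁻¹ f) · R⁻¹ f. Then for every h* ∈ ℝ^r satisfying |fᵀ h* − d| ≤ ρ, the monotone approximation property holds: (h − h*)ᵀ R (h − h*) − (h⁺ − h*)ᵀ R (h⁺ − h*) ≥ 0. -/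
/-!
Write `u = h - h*`, `v = R⁻¹f` and `s = fᵀh* - d`, so `|s| ≤ ρ` and `fᵀu = -(e + s)`.
Since `R v = f`, the step `h⁺ = h + c v` changes the squared `R`-norm by `2c fᵀu + c² fᵀR⁻¹f`.
With `c = λδ / fᵀR⁻¹f`, where `δ` is the soft-thresholded residual, the decrease is
`λδ (2(e + s) - λδ) / fᵀR⁻¹f ≥ λ(2 - λ) δ² / fᵀR⁻¹f ≥ 0`, because `δ (e + s) ≥ δ²`.
-/

open Matrix

noncomputable def softThreshold (ρ e : ℝ) : ℝ := Real.sign e * max (|e| - ρ) 0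

/-- Since `|s| ≤ ρ`, `e + s` lies on the same side of `0` as `e`, at distance at least `|e| - ρ`. -/
lemma sq_softThreshold_le_mul_add {ρ e s : ℝ} (hs : |s| ≤ ρ) :
    softThreshold ρ e ^ 2 ≤ softThreshold ρ e * (e + s) := by
  obtain ⟨hs₁, hs₂⟩ := abs_le.mp hs
  unfold softThreshold
  rcases lt_trichotomy e 0 with he | rfl | he
  · rw [Real.sign_of_neg he, abs_of_neg he]
    rcases le_total (-e - ρ) 0 with hm | hm
    · simp [max_eq_right hm]
    · rw [max_eq_left hm]; nlinarith
  · simp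
  · rw [Real.sign_of_pos he, abs_of_pos he]
    rcases le_total (e - ρ) 0 with hm | hm
    · simp [max_eq_right hm]
    · rw [max_eq_left hm]; nlinarith

lemma relaxed_softThreshold_mul_nonneg {ρ e s lam : ℝ} (hs : |s| ≤ ρ)
    (hlam0 : 0 ≤ lam) (hlam2 : lam ≤ 2) :
    0 ≤ lam * softThreshold ρ e * (2 * (e + s) - lam * softThreshold ρ e) := by
  have hsq := sq_softThreshold_le_mul_add (e := e) hs
  have hrelax : 0 ≤ lam * (2 - lam) * softThreshold ρ e ^ 2 :=
    mul_nonneg (mul_nonneg hlam0 (by linarith)) (sq_nonneg _)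
  nlinarith

lemma dotProduct_mulVec_add_smul_inv_mulVec {ι K : Type*} [Fintype ι] [DecidableEq ι]
    [CommRing K] {R : Matrix ι ι K} (hRsymm : R.IsSymm) (hR : IsUnit R.det)
    (u f : ι → K) (c : K) :
    (u + c • R⁻¹ *ᵥ f) ⬝ᵥ R *ᵥ (u + c • R⁻¹ *ᵥ f) =
      u ⬝ᵥ R *ᵥ u + 2 * c * (f ⬝ᵥ u) + c ^ 2 * (f ⬝ᵥ R⁻¹ *ᵥ f) := by
  have hRinv : R *ᵥ R⁻¹ *ᵥ f = f := by
    rw [mulVec_mulVec, mul_nonsing_inv R hR, one_mulVec]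
  have hleft : ∀ w, (R⁻¹ *ᵥ f) ⬝ᵥ R *ᵥ w = f ⬝ᵥ w := fun w => by
    rw [dotProduct_mulVec, ← mulVec_transpose, hRsymm.eq, hRinv]
  rw [mulVec_add, mulVec_smul, hRinv, add_dotProduct, dotProduct_add, dotProduct_add,
    smul_dotProduct, smul_dotProduct, hleft, dotProduct_smul, dotProduct_smul,
    dotProduct_comm u f, dotProduct_comm (R⁻¹ *ᵥ f) f]
  ring

theorem stmt13_general {r : ℕ} (R : Matrix (Fin r) (Fin r) ℝ) (hR : R.PosDef)
    (f : Fin r → ℝ) (d ρ lam : ℝ)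
    (hlam0 : 0 ≤ lam) (hlam2 : lam ≤ 2)
    (h : Fin r → ℝ) (e : ℝ) (he : e = d - f ⬝ᵥ h)
    (h' : Fin r → ℝ)
    (hh' : h' = h + (lam * Real.sign e * max (|e| - ρ) 0 / (f ⬝ᵥ R⁻¹.mulVec f)) •
      R⁻¹.mulVec f)
    (hstar : Fin r → ℝ) (hfeas : |f ⬝ᵥ hstar - d| ≤ ρ) :
    0 ≤ (h - hstar) ⬝ᵥ R.mulVec (h - hstar) - (h' - hstar) ⬝ᵥ R.mulVec (h' - hstar) := by
  set q := f ⬝ᵥ R⁻¹ *ᵥ f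
  set t := lam * softThreshold ρ e
  have hq : 0 ≤ q := by simpa using hR.inv.posSemidef.dotProduct_mulVec_nonneg f
  have hstep : h' - hstar = (h - hstar) + (t / q) • R⁻¹ *ᵥ f := by
    rw [hh', show t = lam * Real.sign e * max (|e| - ρ) 0 from (mul_assoc ..).symm]
    abel
  have hres : f ⬝ᵥ (h - hstar) = -(e + (f ⬝ᵥ hstar - d)) := by
    rw [dotProduct_sub, he]; ring
  rw [hstep, dotProduct_mulVec_add_smul_inv_mulVec (isHermitian_iff_isSymm.mp hR.isHermitian)
    ((isUnit_iff_isUnit_det R).mp hR.isUnit), hres]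
  have hdecrease := relaxed_softThreshold_mul_nonneg (e := e) hfeas hlam0 hlam2
  -- if `fᵀR⁻¹f = 0` the step vanishes, as `t / 0 = 0`
  rcases hq.eq_or_lt with hq0 | hqpos
  · simp [← hq0]
  · calc 0 ≤ t * (2 * (e + (f ⬝ᵥ hstar - d)) - t) / q := div_nonneg hdecrease hq
      _ = _ := by field_simp; ring

/-- Monotone approximation (Theorem 2(a)): the λ-relaxed projection, in the `R`-metric, of `h`
onto the hyperslab `{x : |fᵀx - d| ≤ ρ}` does not move away from any point of the hyperslab. -/
theorem stmt13 {r : ℕ} (R : Matrix (Fin r) (Fin r) ℝ) (hR : R.PosDef)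
    (f : Fin r → ℝ) (hf : f ≠ 0) (d ρ lam : ℝ) (hρ : 0 ≤ ρ)
    (hlam0 : 0 ≤ lam) (hlam2 : lam ≤ 2)
    (h : Fin r → ℝ) (e : ℝ) (he : e = d - f ⬝ᵥ h)
    (h' : Fin r → ℝ)
    (hh' : h' = h + (lam * Real.sign e * max (|e| - ρ) 0 / (f ⬝ᵥ R⁻¹.mulVec f)) •
      R⁻¹.mulVec f)
    (hstar : Fin r → ℝ) (hfeas : |f ⬝ᵥ hstar - d| ≤ ρ) :
    0 ≤ (h - hstar) ⬝ᵥ R.mulVec (h - hstar) - (h' - hstar) ⬝ᵥ R.mulVec (h' - hstar) :=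
  stmt13_general R hR f d ρ lam hlam0 hlam2 h e he h' hh' hstar hfeas
end

section
/- Let (Ω, P) be a probability space, u : Ω → ℝ^L a random vector whose law is the probability measure μ on ℝ^L, ν ∈ L²(Ω, P), and ψ ∈ L²(ℝ^L, μ). Let f₁, …, f_{r−1}, g be nonzero elements of L²(ℝ^L, μ) (r ≥ 2), let M := span{f₁, …, f_{r−1}} with g ∉ M, and M' := M + span{g}. Define d := ψ(u) + ν, and assume E[f(u) ν] = 0 for every f ∈ M' and E[ψ(u) ν] = 0. Suppose the coherence of every pair of distinct vectors among {g, f₁, …, f_{r−1}} is at most δ, where δ ∈ [0, 1] satisfies (r − 1)δ < 1. Write P_{M'}(ψ) uniquely as P_{M'}(ψ) = m + h* g with m ∈ M and h* ∈ ℝ. Then E[(d − (P_M ψ)(u))²] − E[(d − (P_{M'} ψ)(u))²] ≥ (h*)² ‖g‖² ( 1 − (r − 1)δ² / (1 − (r − 2)δ) ). -/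
/-!
Under the orthogonality assumptions on the noise, the mean square error of the estimator
`h(u)`, `h ∈ M'`, is `‖ψ - h‖² + E[ν²]`; hence the MMSE reduction equals
`‖P_{M'} ψ - P_M ψ‖² = ‖h* g + (m - P_M ψ)‖² ≥ (h*)² dist(g, M)²`.
To bound `dist(g, M)² = ‖g‖² - ‖P_M g‖²`, write `P_M g = ∑ cᵢ fᵢ` and `s = ∑ |cᵢ| ‖fᵢ‖`.
Coherence with `g` gives `‖P_M g‖² = ⟪g, P_M g⟫ ≤ δ ‖g‖ s`, while the Gershgorin-type lower
bound on the Gram form together with Cauchy–Schwarz gives `(1 - (n - 1) δ) s² ≤ n ‖P_M g‖²`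
for `n = r - 1` dictionary vectors. Eliminating `s` yields
`‖P_M g‖² ≤ n δ² ‖g‖² / (1 - (n - 1) δ)`.
-/

open MeasureTheory RealInnerProductSpace

section Projection

variable {E : Type*} [NormedAddCommGroup E] [InnerProductSpace ℝ E]

theorem Submodule.norm_sub_starProjection_sq_sub_of_le {K K' : Submodule ℝ E}
    [K.HasOrthogonalProjection] [K'.HasOrthogonalProjection] (h : K ≤ K') (x : E) :
    ‖x - K.starProjection x‖ ^ 2 - ‖x - K'.starProjection x‖ ^ 2
      = ‖K'.starProjection x - K.starProjection x‖ ^ 2 := by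
  have horth : ⟪x - K'.starProjection x, K'.starProjection x - K.starProjection x⟫ = 0 :=
    K'.starProjection_inner_eq_zero x _
      (K'.sub_mem (K'.starProjection_apply_mem x) (h (K.starProjection_apply_mem x)))
  rw [← sub_add_sub_cancel x (K'.starProjection x), norm_add_sq_real, horth]
  ring

theorem Submodule.sq_mul_norm_sub_starProjection_sq_le (K : Submodule ℝ E)
    [K.HasOrthogonalProjection] (a : ℝ) (g : E) {z : E} (hz : z ∈ K) :
    a ^ 2 * ‖g - K.starProjection g‖ ^ 2 ≤ ‖a • g + z‖ ^ 2 := by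
  have horth : ⟪a • (g - K.starProjection g), a • K.starProjection g + z⟫ = 0 := by
    rw [real_inner_smul_left, K.starProjection_inner_eq_zero g _
      (K.add_mem (K.smul_mem a (K.starProjection_apply_mem g)) hz), mul_zero]
  calc a ^ 2 * ‖g - K.starProjection g‖ ^ 2 = ‖a • (g - K.starProjection g)‖ ^ 2 := by
        rw [norm_smul, mul_pow, Real.norm_eq_abs, sq_abs]
    _ ≤ ‖a • (g - K.starProjection g) + (a • K.starProjection g + z)‖ ^ 2 := by
        rw [norm_add_sq_real, horth]; nlinarith [sq_nonneg ‖a • K.starProjection g + z‖]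
    _ = ‖a • g + z‖ ^ 2 := by congr 2; rw [smul_sub]; abel

theorem Submodule.inner_starProjection_self (K : Submodule ℝ E) [K.HasOrthogonalProjection]
    (g : E) : ⟪g, K.starProjection g⟫ = ‖K.starProjection g‖ ^ 2 := by
  simpa [real_inner_comm] using K.re_inner_starProjection_eq_normSq g

theorem Submodule.norm_sq_eq_norm_starProjection_sq_add_norm_sub_sq (K : Submodule ℝ E)
    [K.HasOrthogonalProjection] (g : E) :
    ‖g‖ ^ 2 = ‖K.starProjection g‖ ^ 2 + ‖g - K.starProjection g‖ ^ 2 := by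
  simpa [Submodule.starProjection_orthogonal'] using K.norm_sq_eq_add_norm_sq_starProjection g

end Projection

section Coherence

variable {E ι : Type*} [NormedAddCommGroup E] [InnerProductSpace ℝ E] [Fintype ι]

/-- When `‖x‖ * ‖y‖ = 0` the quotient is `0` by convention; then Cauchy–Schwarz forces
`⟪x, y⟫ = 0`, so the bound still holds. -/
theorem abs_real_inner_le_of_div_le {x y : E} {δ : ℝ}
    (h : |⟪x, y⟫| / (‖x‖ * ‖y‖) ≤ δ) : |⟪x, y⟫| ≤ δ * (‖x‖ * ‖y‖) := by
  rcases (mul_nonneg (norm_nonneg x) (norm_nonneg y)).eq_or_lt with h0 | h0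
  · rw [← h0, mul_zero]
    exact (abs_real_inner_le_norm x y).trans h0.ge
  · rwa [div_le_iff₀ h0] at h

theorem norm_sum_smul_sq_eq_sum_sum_inner (c : ι → ℝ) (f : ι → E) :
    ‖∑ i, c i • f i‖ ^ 2 = ∑ i, ∑ j, c i * c j * ⟪f i, f j⟫ := by
  rw [← real_inner_self_eq_norm_sq, sum_inner]
  refine Finset.sum_congr rfl fun i _ ↦ ?_
  rw [real_inner_smul_left, inner_sum, Finset.mul_sum]
  refine Finset.sum_congr rfl fun j _ ↦ ?_
  rw [real_inner_smul_right, mul_assoc]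

theorem sub_le_norm_sum_smul_sq_of_coherence {δ : ℝ} (c : ι → ℝ) (f : ι → E)
    (hcoh : Pairwise fun i j ↦ |⟪f i, f j⟫| ≤ δ * (‖f i‖ * ‖f j‖)) :
    (1 + δ) * ∑ i, (|c i| * ‖f i‖) ^ 2 - δ * (∑ i, |c i| * ‖f i‖) ^ 2
      ≤ ‖∑ i, c i • f i‖ ^ 2 := by
  classical
  set a : ι → ℝ := fun i ↦ |c i| * ‖f i‖
  have hterm : ∀ i j, (1 + δ) * (if i = j then a i ^ 2 else 0) - δ * (a i * a j)
      ≤ c i * c j * ⟪f i, f j⟫ := by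
    intro i j
    rcases eq_or_ne i j with rfl | hij
    · have ha : a i ^ 2 = c i * c i * ‖f i‖ ^ 2 := by simp only [a, mul_pow, sq_abs]; ring
      rw [if_pos rfl, real_inner_self_eq_norm_sq, ← sq, ha]
      exact le_of_eq (by ring)
    · have : |c i * c j * ⟪f i, f j⟫| ≤ δ * (a i * a j) := by
        rw [abs_mul, abs_mul]
        calc |c i| * |c j| * |⟪f i, f j⟫| ≤ |c i| * |c j| * (δ * (‖f i‖ * ‖f j‖)) := by
              gcongr; exact hcoh hij
          _ = δ * (a i * a j) := by ring
      simp only [if_neg hij, mul_zero, zero_sub]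
      exact neg_le_of_abs_le this
  calc (1 + δ) * ∑ i, a i ^ 2 - δ * (∑ i, a i) ^ 2
      = ∑ i, ∑ j, ((1 + δ) * (if i = j then a i ^ 2 else 0) - δ * (a i * a j)) := by
        simp only [sq, Finset.mul_sum, Finset.sum_mul, mul_ite, mul_zero, Finset.sum_sub_distrib,
          Finset.sum_ite_eq, Finset.mem_univ, if_true, sub_right_inj]
        rw [Finset.sum_comm]
    _ ≤ ∑ i, ∑ j, c i * c j * ⟪f i, f j⟫ := by gcongr with i _ j _; exact hterm i j
    _ = ‖∑ i, c i • f i‖ ^ 2 := (norm_sum_smul_sq_eq_sum_sum_inner c f).symm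

theorem mul_sq_sum_le_card_mul_norm_sum_smul_sq_of_coherence {δ : ℝ} (hδ : 0 ≤ δ)
    (c : ι → ℝ) (f : ι → E)
    (hcoh : Pairwise fun i j ↦ |⟪f i, f j⟫| ≤ δ * (‖f i‖ * ‖f j‖)) :
    (1 - (Fintype.card ι - 1) * δ) * (∑ i, |c i| * ‖f i‖) ^ 2
      ≤ Fintype.card ι * ‖∑ i, c i • f i‖ ^ 2 := by
  have hgram := sub_le_norm_sum_smul_sq_of_coherence c f hcoh
  have hcs : (∑ i, |c i| * ‖f i‖) ^ 2 ≤ Fintype.card ι * ∑ i, (|c i| * ‖f i‖) ^ 2 :=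
    sq_sum_le_card_mul_sum_sq
  linear_combination (Fintype.card ι : ℝ) * hgram + (1 + δ) * hcs

theorem Submodule.norm_starProjection_sq_le_of_coherence (K : Submodule ℝ E)
    [K.HasOrthogonalProjection] (f : ι → E) (hK : K ≤ Submodule.span ℝ (Set.range f)) (g : E)
    {δ : ℝ} (hδ : 0 ≤ δ) (hβ : 0 < 1 - (Fintype.card ι - 1) * δ)
    (hg : ∀ i, |⟪g, f i⟫| ≤ δ * (‖g‖ * ‖f i‖))
    (hf : Pairwise fun i j ↦ |⟪f i, f j⟫| ≤ δ * (‖f i‖ * ‖f j‖)) :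
    ‖K.starProjection g‖ ^ 2
      ≤ Fintype.card ι * δ ^ 2 * ‖g‖ ^ 2 / (1 - (Fintype.card ι - 1) * δ) := by
  set β := 1 - ((Fintype.card ι : ℝ) - 1) * δ
  set t := ‖K.starProjection g‖ ^ 2
  obtain ⟨c, hc⟩ : ∃ c : ι → ℝ, ∑ i, c i • f i = K.starProjection g :=
    (Submodule.mem_span_range_iff_exists_fun ℝ).mp (hK (K.starProjection_apply_mem g))
  set s := ∑ i, |c i| * ‖f i‖
  have hupper : t ≤ δ * ‖g‖ * s := by
    rw [show t = _ from (K.inner_starProjection_self g).symm, ← hc, inner_sum, Finset.mul_sum]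
    gcongr with i
    rw [real_inner_smul_right]
    calc c i * ⟪g, f i⟫ ≤ |c i| * |⟪g, f i⟫| := by rw [← abs_mul]; exact le_abs_self _
      _ ≤ |c i| * (δ * (‖g‖ * ‖f i‖)) := by gcongr; exact hg i
      _ = δ * ‖g‖ * (|c i| * ‖f i‖) := by ring
  have hlower : β * s ^ 2 ≤ Fintype.card ι * t := by
    simpa only [t, ← hc] using mul_sq_sum_le_card_mul_norm_sum_smul_sq_of_coherence hδ c f hf
  have ht : 0 ≤ t := sq_nonneg _
  have hs : 0 ≤ s := Finset.sum_nonneg fun i _ ↦ by positivity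
  rw [le_div_iff₀ hβ]
  rcases ht.eq_or_lt with h0 | hpos
  · rw [← h0, zero_mul]; positivity
  · refine le_of_mul_le_mul_right ?_ hpos
    have hsq : t ^ 2 ≤ (δ * ‖g‖ * s) ^ 2 := pow_le_pow_left₀ ht hupper 2
    linear_combination β * hsq + δ ^ 2 * ‖g‖ ^ 2 * hlower

theorem Submodule.mul_le_norm_sub_starProjection_sq_of_coherence (K : Submodule ℝ E)
    [K.HasOrthogonalProjection] (f : ι → E) (hK : K ≤ Submodule.span ℝ (Set.range f)) (g : E)
    {δ : ℝ} (hδ : 0 ≤ δ) (hβ : 0 < 1 - (Fintype.card ι - 1) * δ)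
    (hg : ∀ i, |⟪g, f i⟫| ≤ δ * (‖g‖ * ‖f i‖))
    (hf : Pairwise fun i j ↦ |⟪f i, f j⟫| ≤ δ * (‖f i‖ * ‖f j‖)) :
    ‖g‖ ^ 2 * (1 - Fintype.card ι * δ ^ 2 / (1 - (Fintype.card ι - 1) * δ))
      ≤ ‖g - K.starProjection g‖ ^ 2 := by
  calc ‖g‖ ^ 2 * (1 - Fintype.card ι * δ ^ 2 / (1 - (Fintype.card ι - 1) * δ))
      = ‖g‖ ^ 2 - Fintype.card ι * δ ^ 2 * ‖g‖ ^ 2 / (1 - (Fintype.card ι - 1) * δ) := by ring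
    _ ≤ ‖g‖ ^ 2 - ‖K.starProjection g‖ ^ 2 := by
      gcongr; exact K.norm_starProjection_sq_le_of_coherence f hK g hδ hβ hg hf
    _ = ‖g - K.starProjection g‖ ^ 2 := by
      rw [K.norm_sq_eq_norm_starProjection_sq_add_norm_sub_sq g]; ring

end Coherence

section MeanSquare

variable {Ω α : Type*} [MeasurableSpace Ω] [MeasurableSpace α] {P : Measure Ω} {μ : Measure α}

theorem integral_add_sq_of_integral_mul_eq_zero_s16 {a b : Ω → ℝ} (ha : MemLp a 2 P)
    (hb : MemLp b 2 P) (hab : ∫ ω, a ω * b ω ∂P = 0) :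
    ∫ ω, (a ω + b ω) ^ 2 ∂P = ∫ ω, a ω ^ 2 ∂P + ∫ ω, b ω ^ 2 ∂P := by
  have hcross : Integrable (fun ω ↦ 2 * (a ω * b ω)) P := (ha.integrable_mul hb).const_mul 2
  simp only [add_sq, mul_assoc]
  rw [integral_add, integral_add, integral_const_mul, hab, mul_zero, add_zero]
  exacts [ha.integrable_sq, hcross, ha.integrable_sq.add hcross, hb.integrable_sq]

theorem MeasureTheory.Lp.integral_comp_sq_eq_norm_sq {u : Ω → α}
    (hu : MeasurePreserving u P μ) (w : Lp ℝ 2 μ) : ∫ ω, w (u ω) ^ 2 ∂P = ‖w‖ ^ 2 := by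
  have hw : AEStronglyMeasurable (fun x ↦ w x ^ 2) (P.map u) := by
    rw [hu.map_eq]; exact (Lp.aestronglyMeasurable w).pow 2
  rw [← integral_map hu.aemeasurable hw, hu.map_eq, ← real_inner_self_eq_norm_sq, L2.inner_def]
  simp [sq]

theorem integral_comp_add_sub_sq {u : Ω → α} (hu : MeasurePreserving u P μ) {ν : Ω → ℝ}
    (hν : MemLp ν 2 P) (ψ h : Lp ℝ 2 μ) (hψ : ∫ ω, ψ (u ω) * ν ω ∂P = 0)
    (hh : ∫ ω, h (u ω) * ν ω ∂P = 0) :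
    ∫ ω, (ψ (u ω) + ν ω - h (u ω)) ^ 2 ∂P = ‖ψ - h‖ ^ 2 + ∫ ω, ν ω ^ 2 ∂P := by
  have hcomp : ∀ w : Lp ℝ 2 μ, MemLp (fun ω ↦ w (u ω)) 2 P :=
    fun w ↦ (Lp.memLp w).comp_measurePreserving hu
  have hsub : (fun ω ↦ (ψ - h) (u ω)) =ᵐ[P] fun ω ↦ ψ (u ω) - h (u ω) := by
    have hsub' : ⇑(ψ - h) =ᵐ[P.map u] ⇑ψ - ⇑h := by rw [hu.map_eq]; exact Lp.coeFn_sub ψ h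
    exact ae_eq_comp hu.aemeasurable hsub'
  have hint : ∀ w : Lp ℝ 2 μ, Integrable (fun ω ↦ w (u ω) * ν ω) P :=
    fun w ↦ (hcomp w).integrable_mul hν
  have hcross : ∫ ω, (ψ - h) (u ω) * ν ω ∂P = 0 := by
    rw [integral_congr_ae (g := fun ω ↦ ψ (u ω) * ν ω - h (u ω) * ν ω)
      (by filter_upwards [hsub] with ω hω; rw [hω, sub_mul]),
      integral_sub (hint ψ) (hint h), hψ, hh, sub_zero]
  rw [← Lp.integral_comp_sq_eq_norm_sq hu,
    ← integral_add_sq_of_integral_mul_eq_zero_s16 (hcomp _) hν hcross]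
  refine integral_congr_ae ?_
  filter_upwards [hsub] with ω hω
  rw [hω]; ring

end MeanSquare

theorem stmt16_general {Ω : Type*} [MeasurableSpace Ω] (P : Measure Ω)
    {L : ℕ} (μ : Measure (Fin L → ℝ))
    (u : Ω → (Fin L → ℝ)) (hu : Measurable u) (hlaw : P.map u = μ)
    (ν : Ω → ℝ) (hν : MemLp ν 2 P)
    (ψ : Lp ℝ 2 μ) {r : ℕ} (hr : 2 ≤ r)
    (g : Lp ℝ 2 μ) (f : Fin (r - 1) → Lp ℝ 2 μ)
    (M M' : Submodule ℝ (Lp ℝ 2 μ)) [FiniteDimensional ℝ M] [FiniteDimensional ℝ M']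
    (hM : M = Submodule.span ℝ (Set.range f))
    (hM' : M' = M ⊔ Submodule.span ℝ {g})
    (d : Ω → ℝ) (hd : d = fun ω => ψ (u ω) + ν ω)
    (horth : ∀ h ∈ M', ∫ ω, (h : Lp ℝ 2 μ) (u ω) * ν ω ∂P = 0)
    (horthψ : ∫ ω, ψ (u ω) * ν ω ∂P = 0)
    (δ : ℝ) (hδ0 : 0 ≤ δ) (hδr : ((r : ℝ) - 1) * δ < 1)
    (hcoh1 : ∀ i, |⟪g, f i⟫| / (‖g‖ * ‖f i‖) ≤ δ)
    (hcoh2 : ∀ i j, i ≠ j → |⟪f i, f j⟫| / (‖f i‖ * ‖f j‖) ≤ δ)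
    (m : Lp ℝ 2 μ) (hm : m ∈ M) (hstar : ℝ)
    (hdecomp : (M'.orthogonalProjection ψ : Lp ℝ 2 μ) = m + hstar • g) :
    hstar ^ 2 * ‖g‖ ^ 2 * (1 - ((r : ℝ) - 1) * δ ^ 2 / (1 - ((r : ℝ) - 2) * δ))
      ≤ (∫ ω, (d ω - (M.orthogonalProjection ψ : Lp ℝ 2 μ) (u ω)) ^ 2 ∂P)
        - ∫ ω, (d ω - (M'.orthogonalProjection ψ : Lp ℝ 2 μ) (u ω)) ^ 2 ∂P := by
  subst hd
  have hMM' : M ≤ M' := hM' ▸ le_sup_left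
  have hmse : ∀ h ∈ M',
      ∫ ω, (ψ (u ω) + ν ω - h (u ω)) ^ 2 ∂P = ‖ψ - h‖ ^ 2 + ∫ ω, ν ω ^ 2 ∂P :=
    fun h hh ↦ integral_comp_add_sub_sq ⟨hu, hlaw⟩ hν ψ h horthψ (horth h hh)
  simp only [Submodule.coe_orthogonalProjectionOnto_apply] at hdecomp ⊢
  rw [hmse _ (hMM' (M.starProjection_apply_mem ψ)), hmse _ (M'.starProjection_apply_mem ψ),
    add_sub_add_right_eq_sub, Submodule.norm_sub_starProjection_sq_sub_of_le hMM']
  have hdiff :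
      M'.starProjection ψ - M.starProjection ψ = hstar • g + (m - M.starProjection ψ) := by
    rw [hdecomp]; abel
  have hcard : (Fintype.card (Fin (r - 1)) : ℝ) = r - 1 := by
    rw [Fintype.card_fin, Nat.cast_sub (by omega), Nat.cast_one]
  have hdist := M.mul_le_norm_sub_starProjection_sq_of_coherence f hM.le g hδ0
    (by rw [hcard]; linarith) (fun i ↦ abs_real_inner_le_of_div_le (hcoh1 i))
    (fun i j hij ↦ abs_real_inner_le_of_div_le (hcoh2 i j hij))
  rw [hcard, sub_sub, one_add_one_eq_two] at hdist
  calc hstar ^ 2 * ‖g‖ ^ 2 * (1 - ((r : ℝ) - 1) * δ ^ 2 / (1 - ((r : ℝ) - 2) * δ))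
      = hstar ^ 2 * (‖g‖ ^ 2 * (1 - ((r : ℝ) - 1) * δ ^ 2 / (1 - ((r : ℝ) - 2) * δ))) := by ring
    _ ≤ hstar ^ 2 * ‖g - M.starProjection g‖ ^ 2 := by gcongr
    _ ≤ ‖M'.starProjection ψ - M.starProjection ψ‖ ^ 2 := by
      rw [hdiff]
      exact M.sq_mul_norm_sub_starProjection_sq_le hstar g
        (M.sub_mem hm (M.starProjection_apply_mem ψ))

/-- Combination of the coherence-to-ALD lemma with the MMSE-reduction proposition: if every
pair of distinct vectors among `{g, f₁, …, f_{r-1}}` has coherence at most `δ` with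
`(r-1)δ < 1`, then enlarging the dictionary subspace `M = span{f₁,…,f_{r-1}}` to
`M' = M + span{g}` reduces the MMSE by at least `(h*)²‖g‖²(1 - (r-1)δ²/(1-(r-2)δ))`. -/
theorem stmt16 {Ω : Type*} [MeasurableSpace Ω] (P : Measure Ω) [IsProbabilityMeasure P]
    {L : ℕ} (μ : Measure (Fin L → ℝ)) [IsProbabilityMeasure μ]
    (u : Ω → (Fin L → ℝ)) (hu : Measurable u) (hlaw : P.map u = μ)
    (ν : Ω → ℝ) (hν : MemLp ν 2 P)
    (ψ : Lp ℝ 2 μ) {r : ℕ} (hr : 2 ≤ r)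
    (g : Lp ℝ 2 μ) (f : Fin (r - 1) → Lp ℝ 2 μ)
    (hg : g ≠ 0) (hf : ∀ i, f i ≠ 0)
    (M M' : Submodule ℝ (Lp ℝ 2 μ)) [FiniteDimensional ℝ M] [FiniteDimensional ℝ M']
    (hM : M = Submodule.span ℝ (Set.range f)) (hgM : g ∉ M)
    (hM' : M' = M ⊔ Submodule.span ℝ {g})
    (d : Ω → ℝ) (hd : d = fun ω => ψ (u ω) + ν ω)
    (horth : ∀ h ∈ M', ∫ ω, (h : Lp ℝ 2 μ) (u ω) * ν ω ∂P = 0)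
    (horthψ : ∫ ω, ψ (u ω) * ν ω ∂P = 0)
    (δ : ℝ) (hδ0 : 0 ≤ δ) (hδ1 : δ ≤ 1) (hδr : ((r : ℝ) - 1) * δ < 1)
    (hcoh1 : ∀ i, |⟪g, f i⟫| / (‖g‖ * ‖f i‖) ≤ δ)
    (hcoh2 : ∀ i j, i ≠ j → |⟪f i, f j⟫| / (‖f i‖ * ‖f j‖) ≤ δ)
    (m : Lp ℝ 2 μ) (hm : m ∈ M) (hstar : ℝ)
    (hdecomp : (M'.orthogonalProjection ψ : Lp ℝ 2 μ) = m + hstar • g) :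
    hstar ^ 2 * ‖g‖ ^ 2 * (1 - ((r : ℝ) - 1) * δ ^ 2 / (1 - ((r : ℝ) - 2) * δ))
      ≤ (∫ ω, (d ω - (M.orthogonalProjection ψ : Lp ℝ 2 μ) (u ω)) ^ 2 ∂P)
        - ∫ ω, (d ω - (M'.orthogonalProjection ψ : Lp ℝ 2 μ) (u ω)) ^ 2 ∂P :=
  stmt16_general P μ u hu hlaw ν hν ψ hr g f M M' hM hM' d hd horth horthψ δ hδ0 hδr hcoh1 hcoh2 m
    hm hstar hdecomp
end
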